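/- Let D = log 2/log 3 and 𝐩 = 2π/log 3. The function G(x) = Σ_{n∈ℤ} e^{2πinx}/(1 − D − in𝐩) defines (as a conditionally convergent Fourier series, summed symmetrically) a nonconstant periodic function of period 1 on ℝ. -/

import Mathlib

/-!
Write `a = 1 - D`, `b = 𝐩` and `θ = 2πx`, and pair the terms `n` and `-n` of the symmetric
sums. Splitting `1 / (a - i n b) = i / (n b) + O(1 / n²)`, the principal parts of a pair add up to
`-(2 / b) sin (n θ) / n`, whose series converges by Dirichlet's test (the partial sums of
`sin (n θ)` are bounded, by telescoping against `sin (θ / 2)`), while the remainders are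
absolutely summable. Every partial sum is `1`-periodic in `x`, hence so is the limit `G`. Finally
`G 0 - G (1/2)` has real part `∑ (1 - (-1)ⁿ) a / (a² + n² b²) ≥ 2a / (a² + b²) > 0`.
-/

open Filter Complex Finset Topology
open scoped Real

lemma Finset.sum_Icc_neg_eq_add_sum_range {M : Type*} [AddCommGroup M] (f : ℤ → M) (N : ℕ) :
    ∑ n ∈ Icc (-(N : ℤ)) N, f n = f 0 + ∑ n ∈ range N, (f (n + 1) + f (-(n + 1))) := by
  induction N with
  | zero => simp
  | succ N ih =>
    rw [Nat.cast_succ, sum_Icc_succ_eq_add_endpoints, ih, sum_range_succ]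
    abel

namespace Real

lemma abs_sin_half_mul_abs_sum_range_sin_le (θ : ℝ) (N : ℕ) :
    |sin (θ / 2)| * |∑ n ∈ range N, sin ((n + 1) * θ)| ≤ 1 := by
  have htelescope : 2 * (∑ n ∈ range N, sin ((n + 1) * θ)) * sin (θ / 2)
      = cos (θ / 2) - cos ((N + 1 / 2) * θ) := by
    have hstep (n : ℕ) : 2 * sin ((n + 1) * θ) * sin (θ / 2)
        = cos ((n + 1 / 2) * θ) - cos (((n + 1 : ℕ) + 1 / 2) * θ) := by
      rw [two_mul_sin_mul_sin]; push_cast; ring_nf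
    rw [mul_sum, sum_mul, sum_congr rfl fun n _ => hstep n, sum_range_sub']
    push_cast
    ring_nf
  have hbound : |cos (θ / 2) - cos ((N + 1 / 2) * θ)| ≤ 2 := by
    rw [abs_le]; constructor <;>
      linarith [neg_one_le_cos (θ / 2), cos_le_one (θ / 2),
        neg_one_le_cos ((N + 1 / 2) * θ), cos_le_one ((N + 1 / 2) * θ)]
  rw [← htelescope, abs_mul, abs_mul, abs_two] at hbound
  linarith

lemma exists_abs_sum_range_sin_le (θ : ℝ) :
    ∃ C, ∀ N : ℕ, |∑ n ∈ range N, sin ((n + 1) * θ)| ≤ C := by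
  by_cases h : sin (θ / 2) = 0
  · obtain ⟨k, hk⟩ := sin_eq_zero_iff.mp h
    have hzero (n : ℕ) : sin ((n + 1) * θ) = 0 := by
      rw [show θ = 2 * k * π by linarith,
        show (n + 1) * (2 * k * π) = ((2 * (n + 1) * k : ℤ) : ℝ) * π by push_cast; ring]
      exact sin_int_mul_pi _
    exact ⟨0, fun N => by simp [hzero]⟩
  · refine ⟨1 / |sin (θ / 2)|, fun N => ?_⟩
    rw [le_div_iff₀' (abs_pos.mpr h)]
    exact abs_sin_half_mul_abs_sum_range_sin_le θ N

lemma cauchySeq_sum_range_sin_div (θ : ℝ) :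
    CauchySeq fun N : ℕ => ∑ n ∈ range N, sin ((n + 1) * θ) / (n + 1) := by
  obtain ⟨C, hC⟩ := exists_abs_sum_range_sin_le θ
  have hanti : Antitone fun n : ℕ => 1 / ((n : ℝ) + 1) := fun _ _ => Nat.one_div_le_one_div
  convert hanti.cauchySeq_series_mul_of_tendsto_zero_of_bounded
    tendsto_one_div_add_atTop_nhds_zero_nat fun N => (norm_eq_abs _).trans_le (hC N) using 3
  rw [smul_eq_mul, div_mul_eq_mul_div, one_mul]

end Real

noncomputable def fourierTerm (a b x : ℝ) (n : ℤ) : ℂ :=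
  exp (2 * π * I * n * x) / (a - I * n * b)

noncomputable def fourierRemainder (a b x : ℝ) (n : ℤ) : ℂ :=
  fourierTerm a b x n - I * exp (2 * π * I * n * x) / (n * b)

section

variable (a : ℝ) {b : ℝ} (x : ℝ)

lemma norm_fourierRemainder_le (hb : b ≠ 0) {n : ℤ} (hn : n ≠ 0) :
    ‖fourierRemainder a b x n‖ ≤ |a| / (n * b) ^ 2 := by
  have hn' : (n : ℂ) ≠ 0 := by exact_mod_cast hn
  have hb' : (b : ℂ) ≠ 0 := by exact_mod_cast hb
  have hlow : |(n : ℝ) * b| ≤ ‖(a : ℂ) - I * n * b‖ := by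
    simpa using abs_im_le_norm ((a : ℂ) - I * n * b)
  have hden : (a : ℂ) - I * n * b ≠ 0 :=
    norm_pos_iff.mp ((abs_pos.mpr (mul_ne_zero (Int.cast_ne_zero.mpr hn) hb)).trans_le hlow)
  have hexp : ‖exp (2 * π * I * n * x)‖ = 1 := by simp [norm_exp]
  have key : fourierRemainder a b x n
      = -I * a * exp (2 * π * I * n * x) / ((n * b) * (a - I * n * b)) := by
    rw [fourierRemainder, fourierTerm]
    field_simp
    ring_nf
    rw [I_sq]
    ring
  rw [key, norm_div, norm_mul, norm_mul, norm_mul, hexp, norm_neg, norm_I, norm_real,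
    Real.norm_eq_abs, ← ofReal_intCast, ← ofReal_mul, norm_real, Real.norm_eq_abs, ← sq_abs,
    sq]
  simp only [one_mul, mul_one]
  gcongr
  exact_mod_cast hlow

lemma fourierTerm_add_fourierTerm_neg (hb : b ≠ 0) (n : ℕ) :
    fourierTerm a b x (n + 1) + fourierTerm a b x (-(n + 1))
      = ((-2 / b * (Real.sin ((n + 1) * (2 * π * x)) / (n + 1)) : ℝ) : ℂ)
        + (fourierRemainder a b x (n + 1) + fourierRemainder a b x (-(n + 1))) := by
  have hsin := two_sin ((n + 1) * (2 * π * x) : ℂ)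
  have he_pos :
      exp (2 * π * I * ((n + 1 : ℤ) : ℂ) * x) = exp ((n + 1) * (2 * π * x) * I) := by
    push_cast; ring_nf
  have he_neg :
      exp (2 * π * I * ((-(n + 1) : ℤ) : ℂ) * x) = exp (-((n + 1) * (2 * π * x)) * I) := by
    push_cast; ring_nf
  have hb' : (b : ℂ) ≠ 0 := by exact_mod_cast hb
  have hn' : (n : ℂ) + 1 ≠ 0 := by exact_mod_cast n.succ_ne_zero
  simp only [fourierRemainder, he_pos, he_neg]
  push_cast
  generalize ((n : ℂ) + 1) * (2 * π * x) = θ at hsin ⊢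
  field_simp
  rw [neg_mul] at hsin
  simp only [mul_comm I θ]
  linear_combination hsin

lemma summable_fourierRemainder_add_neg (hb : b ≠ 0) :
    Summable fun n : ℕ => fourierRemainder a b x (n + 1) + fourierRemainder a b x (-(n + 1)) := by
  have hp : Summable fun n : ℕ => 1 / ((n : ℝ) + 1) ^ 2 := by
    simpa using (summable_nat_add_iff 1).mpr (Real.summable_one_div_nat_pow.mpr one_lt_two)
  refine Summable.of_norm_bounded (hp.mul_left (2 * |a| / b ^ 2)) fun n => ?_
  have hn : ((n : ℤ) + 1) ≠ 0 := by omega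
  calc _ ≤ ‖fourierRemainder a b x (n + 1)‖ + ‖fourierRemainder a b x (-(n + 1))‖ :=
        norm_add_le _ _
    _ ≤ |a| / (((n + 1 : ℤ) : ℝ) * b) ^ 2 + |a| / (((-(n + 1) : ℤ) : ℝ) * b) ^ 2 :=
        add_le_add (norm_fourierRemainder_le a x hb hn)
          (norm_fourierRemainder_le a x hb (neg_ne_zero.mpr hn))
    _ = 2 * |a| / b ^ 2 * (1 / ((n : ℝ) + 1) ^ 2) := by
        push_cast
        field_simp
        ring

lemma exists_tendsto_sum_Icc_fourierTerm (hb : b ≠ 0) :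
    ∃ L, Tendsto (fun N : ℕ => ∑ n ∈ Icc (-(N : ℤ)) N, fourierTerm a b x n) atTop (𝓝 L) := by
  obtain ⟨s, hs⟩ :=
    cauchySeq_tendsto_of_complete (Real.cauchySeq_sum_range_sin_div (2 * π * x))
  have hsplit (N : ℕ) : ∑ n ∈ Icc (-(N : ℤ)) N, fourierTerm a b x n
      = fourierTerm a b x 0
        + ((-2 / b * ∑ n ∈ range N, Real.sin ((n + 1) * (2 * π * x)) / (n + 1) : ℝ) : ℂ)
        + ∑ n ∈ range N,
            (fourierRemainder a b x (n + 1) + fourierRemainder a b x (-(n + 1))) := by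
    simp only [sum_Icc_neg_eq_add_sum_range, fourierTerm_add_fourierTerm_neg a x hb,
      sum_add_distrib, mul_sum, ofReal_sum, add_assoc]
  simp_rw [hsplit]
  exact ⟨_, ((continuous_ofReal.tendsto _).comp (hs.const_mul _)).const_add _ |>.add
    (summable_fourierRemainder_add_neg a x hb).hasSum.tendsto_sum_nat⟩

end

lemma fourierTerm_add_one (a b x : ℝ) (n : ℤ) :
    fourierTerm a b (x + 1) n = fourierTerm a b x n := by
  have h : 2 * π * I * n * ((x + 1 : ℝ) : ℂ) = 2 * π * I * n * x + n * (2 * π * I) := by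
    push_cast; ring
  rw [fourierTerm, fourierTerm, h, exp_add, exp_int_mul_two_pi_mul_I, mul_one]

lemma re_fourierTerm_zero_sub_fourierTerm_half (a b : ℝ) (n : ℤ) :
    (fourierTerm a b 0 n - fourierTerm a b (1 / 2) n).re
      = (1 - (-1) ^ n) * a / (a ^ 2 + (n * b) ^ 2) := by
  have h : 2 * π * I * n * ((1 / 2 : ℝ) : ℂ) = n * (π * I) := by push_cast; ring
  have hnum :
      exp (2 * π * I * n * ((0 : ℝ) : ℂ)) - exp (n * (π * I)) = ((1 - (-1) ^ n : ℝ) : ℂ) := by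
    rw [exp_int_mul, exp_pi_mul_I]; push_cast; simp
  rw [fourierTerm, fourierTerm, h, ← sub_div, hnum, div_eq_mul_inv, re_ofReal_mul, inv_re,
    normSq_apply]
  simp only [sub_re, ofReal_re, mul_re, I_re, intCast_re, zero_mul, I_im, intCast_im, mul_zero,
    sub_self, mul_im, one_mul, zero_add, ofReal_im, sub_zero, sub_im, zero_sub, mul_neg, neg_mul,
    neg_neg]
  ring

lemma le_re_sum_Icc_fourierTerm_zero_sub_fourierTerm_half {a : ℝ} (ha : 0 ≤ a) (b : ℝ) {N : ℕ}
    (hN : 1 ≤ N) : 2 * a / (a ^ 2 + b ^ 2)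
      ≤ (∑ n ∈ Icc (-(N : ℤ)) N, (fourierTerm a b 0 n - fourierTerm a b (1 / 2) n)).re := by
  rw [re_sum]
  simp_rw [re_fourierTerm_zero_sub_fourierTerm_half]
  have hnonneg (n : ℤ) : 0 ≤ (1 - (-1) ^ n) * a / (a ^ 2 + (n * b) ^ 2) := by
    have : (-1 : ℝ) ^ n ≤ 1 := by
      rcases n.even_or_odd with hn | hn
      · rw [hn.neg_one_zpow]
      · rw [hn.neg_one_zpow]; norm_num
    have : 0 ≤ 1 - (-1 : ℝ) ^ n := by linarith
    positivity
  calc 2 * a / (a ^ 2 + b ^ 2)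
        = (1 - (-1) ^ (1 : ℤ)) * a / (a ^ 2 + ((1 : ℤ) * b) ^ 2) := by norm_num
    _ ≤ _ := single_le_sum (fun n _ => hnonneg n) (mem_Icc.mpr ⟨by omega, by omega⟩)

lemma ne_of_tendsto_sum_Icc_fourierTerm_zero_half {a : ℝ} (ha : 0 < a) (b : ℝ) {L₀ L₁ : ℂ}
    (h₀ : Tendsto (fun N : ℕ => ∑ n ∈ Icc (-(N : ℤ)) N, fourierTerm a b 0 n) atTop (𝓝 L₀))
    (h₁ : Tendsto (fun N : ℕ => ∑ n ∈ Icc (-(N : ℤ)) N, fourierTerm a b (1 / 2) n) atTop (𝓝 L₁)) :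
    L₀ ≠ L₁ := by
  have hre : Tendsto (fun N : ℕ => (∑ n ∈ Icc (-(N : ℤ)) N,
      (fourierTerm a b 0 n - fourierTerm a b (1 / 2) n)).re) atTop (𝓝 (L₀ - L₁).re) := by
    simpa only [sum_sub_distrib, Function.comp_def] using
      (continuous_re.tendsto _).comp (h₀.sub h₁)
  have hle : 2 * a / (a ^ 2 + b ^ 2) ≤ (L₀ - L₁).re := ge_of_tendsto hre <|
    eventually_atTop.mpr
      ⟨1, fun N hN => le_re_sum_Icc_fourierTerm_zero_sub_fourierTerm_half ha.le b hN⟩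
  intro h
  rw [h, sub_self, zero_re] at hle
  have : 0 < 2 * a / (a ^ 2 + b ^ 2) := by positivity
  linarith

/-- With D = log 2/log 3 and 𝐩 = 2π/log 3, the symmetric partial sums
Σ_{|n|≤N} e^{2πinx}/(1 - D - in𝐩) converge pointwise to a function G which is
periodic of period 1 and nonconstant. -/
theorem stmt_19 :
    ∃ G : ℝ → ℂ,
      (∀ x : ℝ, Tendsto (fun N : ℕ => ∑ n ∈ Finset.Icc (-(N : ℤ)) (N : ℤ),
          Complex.exp (2 * (Real.pi : ℂ) * Complex.I * (n : ℂ) * (x : ℂ)) /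
            (1 - ((Real.log 2 / Real.log 3 : ℝ) : ℂ)
              - Complex.I * (n : ℂ) * ((2 * Real.pi / Real.log 3 : ℝ) : ℂ)))
        atTop (nhds (G x))) ∧
      (∀ x : ℝ, G (x + 1) = G x) ∧
      (∃ x y : ℝ, G x ≠ G y) := by
  have hlog : 0 < Real.log 2 ∧ Real.log 2 < Real.log 3 :=
    ⟨Real.log_pos (by norm_num), Real.log_lt_log (by norm_num) (by norm_num)⟩
  have ha : 0 < 1 - Real.log 2 / Real.log 3 := by
    rw [sub_pos, div_lt_one (hlog.1.trans hlog.2)]; exact hlog.2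
  have hb : 2 * π / Real.log 3 ≠ 0 := by have := hlog.1.trans hlog.2; positivity
  have hterm (x : ℝ) (n : ℤ) :
      exp (2 * π * I * n * x)
          / (1 - ((Real.log 2 / Real.log 3 : ℝ) : ℂ) - I * n * ((2 * π / Real.log 3 : ℝ) : ℂ))
      = fourierTerm (1 - Real.log 2 / Real.log 3) (2 * π / Real.log 3) x n := by
    rw [fourierTerm, ofReal_sub, ofReal_one]
  simp_rw [hterm]
  choose G hG using fun x =>
    exists_tendsto_sum_Icc_fourierTerm (1 - Real.log 2 / Real.log 3) x hb
  refine ⟨G, hG, fun x => ?_, 0, 1 / 2,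
    ne_of_tendsto_sum_Icc_fourierTerm_zero_half ha _ (hG 0) (hG (1 / 2))⟩
  exact tendsto_nhds_unique (by simpa only [fourierTerm_add_one] using hG (x + 1)) (hG x)
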